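/- Let X ⊆ 2^ω. Then X is non-meager in 2^ω if and only if for every function f : 2^{<ω} → 2^{<ω} there exists g ∈ X such that for infinitely many m, the string (g↾m)⌢f(g↾m) is an initial segment of g. -/

import Mathlib

/-- The length-`m` initial segment of `g ∈ 2^ω`, as a finite binary string. -/
def seg (g : ℕ → Bool) (m : ℕ) : List Bool :=
  List.ofFn fun i : Fin m => g i

/-- The finite binary string `L` is an initial segment of `g ∈ 2^ω`. -/
def PrefixOf (L : List Bool) (g : ℕ → Bool) : Prop :=
  ∀ i, i < L.length → g i = L.getD i false

/-!
For fixed `f`, the points `g` that `f` predicts at some `m ≥ N` form a dense open set, so those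
predicted infinitely often form a dense Gδ, which every non-meagre `X` meets. Conversely, a meagre
`X` misses some intersection of dense open sets `U k`; choosing `f s` so that every extension of
`s ⌢ f s` lies in `U 0 ∩ ⋯ ∩ U |s|`, each `g` predicted infinitely often by `f` lies in every
`U k`, hence outside `X`.
-/

open Set Filter Topology PiNat

@[simp]
lemma seg_length (g : ℕ → Bool) (n : ℕ) : (seg g n).length = n := List.length_ofFn

lemma getD_seg (g : ℕ → Bool) {i n : ℕ} (hi : i < n) : (seg g n).getD i false = g i := by
  simp [seg, hi]

lemma seg_eq_seg_iff {g h : ℕ → Bool} {n : ℕ} : seg h n = seg g n ↔ h ∈ cylinder g n := by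
  simp [seg, List.ofFn_inj, funext_iff, Fin.forall_iff, mem_cylinder_iff]

lemma prefixOf_seg_iff {g h : ℕ → Bool} {n : ℕ} : PrefixOf (seg g n) h ↔ h ∈ cylinder g n := by
  simp only [PrefixOf, seg_length, mem_cylinder_iff]
  exact forall₂_congr fun i hi => by rw [getD_seg g hi]

lemma prefixOf_iff_seg_eq {L : List Bool} {g : ℕ → Bool} : PrefixOf L g ↔ seg g L.length = L := by
  refine ⟨fun h => List.ext_getElem (seg_length ..) fun i _ hi => ?_, fun h i hi => ?_⟩
  · have hgi := h i hi
    rw [List.getD_eq_getElem _ _ hi] at hgi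
    simpa [seg] using hgi
  · rw [← h, getD_seg g hi]

lemma PrefixOf.of_append {s t : List Bool} {g : ℕ → Bool} (h : PrefixOf (s ++ t) g) :
    PrefixOf s g := fun i hi => by
  rw [h i (by rw [List.length_append]; omega), List.getD_append _ _ _ _ hi]

lemma PrefixOf.of_mem_cylinder {L : List Bool} {g h : ℕ → Bool} (hg : PrefixOf L g)
    (hh : h ∈ cylinder g L.length) : PrefixOf L h := fun i hi =>
  (mem_cylinder_iff.1 hh i hi).trans (hg i hi)

lemma exists_cylinder_subset {U : Set (ℕ → Bool)} (hU : IsOpen U) {g : ℕ → Bool} (hg : g ∈ U) :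
    ∃ n, cylinder g n ⊆ U := by
  obtain ⟨_, ⟨x, n, rfl⟩, hgx, hxU⟩ :=
    (isTopologicalBasis_cylinders fun _ => Bool).exists_subset_of_mem_open hg hU
  exact ⟨n, by rwa [mem_cylinder_iff_eq.1 hgx]⟩

/-- `f R† g` in the paper's notation says that `Predicts f g m` holds for infinitely many `m`. -/
def Predicts (f : List Bool → List Bool) (g : ℕ → Bool) (m : ℕ) : Prop :=
  PrefixOf (seg g m ++ f (seg g m)) g

lemma isOpen_setOf_predicts (f : List Bool → List Bool) (m : ℕ) :
    IsOpen {g | Predicts f g m} := by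
  refine isOpen_iff_forall_mem_open.2 fun g hg => ⟨cylinder g (m + (f (seg g m)).length),
    fun h hh => ?_, isOpen_cylinder _ _ _, self_mem_cylinder _ _⟩
  have hseg : seg h m = seg g m :=
    seg_eq_seg_iff.2 (cylinder_anti g (Nat.le_add_right _ _) hh)
  show PrefixOf _ h
  rw [hseg]
  exact hg.of_mem_cylinder (by simpa using hh)

lemma dense_iUnion_setOf_predicts (f : List Bool → List Bool) (N : ℕ) :
    Dense (⋃ m ≥ N, {g | Predicts f g m}) := by
  refine (isTopologicalBasis_cylinders fun _ => Bool).dense_iff.2 ?_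
  rintro _ ⟨x, n, rfl⟩ -
  set m := max n N
  set L := seg x m ++ f (seg x m)
  have hL : PrefixOf L (fun i => L.getD i false) := fun _ _ => rfl
  have hx : (fun i => L.getD i false) ∈ cylinder x m := prefixOf_seg_iff.1 hL.of_append
  refine ⟨_, cylinder_anti x (le_max_left n N) hx, mem_biUnion (le_max_right n N) ?_⟩
  show PrefixOf _ _
  rwa [seg_eq_seg_iff.2 hx]

lemma setOf_infinite_predicts_mem_residual (f : List Bool → List Bool) :
    {g | {m | Predicts f g m}.Infinite} ∈ residual (ℕ → Bool) := by
  have : {g | {m | Predicts f g m}.Infinite} = ⋂ N, ⋃ m ≥ N, {g | Predicts f g m} := by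
    ext g; simp [← Nat.frequently_atTop_iff_infinite, frequently_atTop]
  rw [this]
  exact countable_iInter_mem.2 fun N => residual_of_dense_open
    (isOpen_biUnion fun m _ => isOpen_setOf_predicts f m) (dense_iUnion_setOf_predicts f N)

lemma exists_append_subset {U : Set (ℕ → Bool)} (hUo : IsOpen U) (hUd : Dense U)
    (s : List Bool) : ∃ t, {g | PrefixOf (s ++ t) g} ⊆ U := by
  obtain ⟨g, hgs, hgU⟩ := hUd.inter_open_nonempty _
    (isOpen_cylinder _ (fun i => s.getD i false) s.length) ⟨_, self_mem_cylinder _ _⟩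
  obtain ⟨n, hn⟩ := exists_cylinder_subset hUo hgU
  refine ⟨List.ofFn fun i : Fin n => g (s.length + i), fun h hh =>
    hn (cylinder_anti g (Nat.le_add_left n s.length) ?_)⟩
  have hseg : seg g (s.length + n) =
      seg g s.length ++ List.ofFn fun i : Fin n => g (s.length + i) := by
    simp [seg, List.ofFn_add]
  rw [prefixOf_iff_seg_eq.1 hgs] at hseg
  rw [← prefixOf_seg_iff, hseg]
  exact hh

lemma exists_forall_mem_of_infinite_predicts {U : ℕ → Set (ℕ → Bool)}
    (hUo : ∀ n, IsOpen (U n)) (hUd : ∀ n, Dense (U n)) :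
    ∃ f, ∀ g, {m | Predicts f g m}.Infinite → g ∈ ⋂ n, U n := by
  have hV (s : List Bool) : ∃ t, {g | PrefixOf (s ++ t) g} ⊆ ⋂ k ∈ Iic s.length, U k :=
    exists_append_subset ((finite_Iic _).isOpen_biInter fun k _ => hUo k)
      (dense_biInter_of_isOpen (fun k _ => hUo k) (to_countable _) fun k _ => hUd k) s
  choose f hf using hV
  refine ⟨f, fun g hg => mem_iInter.2 fun k => ?_⟩
  obtain ⟨m, hm, hkm⟩ := hg.exists_gt k
  exact mem_iInter₂.1 (hf _ hm) k (by simpa using hkm.le)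

lemma inter_nonempty_of_not_isMeagre {α : Type*} [TopologicalSpace α] {X s : Set α}
    (hX : ¬ IsMeagre X) (hs : s ∈ residual α) : (X ∩ s).Nonempty := by
  by_contra h
  exact hX (mem_of_superset hs fun g hg hgX => h ⟨g, hgX, hg⟩)

/-- `X ⊆ 2^ω` is non-meager iff for every `f : 2^{<ω} → 2^{<ω}` there is `g ∈ X`
with `(g↾m)⌢f(g↾m)` an initial segment of `g` for infinitely many `m`. -/
theorem stmt9 (X : Set (ℕ → Bool)) :
    ¬ IsMeagre X ↔
      ∀ f : List Bool → List Bool, ∃ g ∈ X,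
        {m : ℕ | PrefixOf (seg g m ++ f (seg g m)) g}.Infinite := by
  constructor
  · intro hX f
    exact inter_nonempty_of_not_isMeagre hX (setOf_infinite_predicts_mem_residual f)
  · intro hX hM
    obtain ⟨t, htX, htG, htd⟩ := mem_residual.1 hM
    obtain ⟨U, hUo, rfl⟩ := htG.eq_iInter_nat
    obtain ⟨f, hf⟩ :=
      exists_forall_mem_of_infinite_predicts hUo fun n => htd.mono (iInter_subset U n)
    obtain ⟨g, hgX, hg⟩ := hX f
    exact htX (hf g hg) hgX
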